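/- If a nonnegative sequence (E_i) satisfies E_0 = 0 and E_{i+1} ≤ (1 - 1/(2δ))·E_i + (2(δ²−1)/δ)·c for all i, where δ ≥ 1 and c ≥ 0, then E_i ≤ 4δ²·c for every i. -/

import Mathlib

theorem forall_le_of_le_mul_add {α : Type*} [Semiring α] [PartialOrder α] [IsOrderedRing α]
    {a b B : α} {E : ℕ → α} (ha : 0 ≤ a) (hB : a * B + b ≤ B) (h0 : E 0 ≤ B)
    (hrec : ∀ i, E (i + 1) ≤ a * E i + b) : ∀ i, E i ≤ B
  | 0 => h0
  | i + 1 => calc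
      E (i + 1) ≤ a * E i + b := hrec i
      _ ≤ a * B + b := by gcongr; exact forall_le_of_le_mul_add ha hB h0 hrec i
      _ ≤ B := hB

theorem bounded_memory_recursion_general (δ c : ℝ) (hδ : 1 ≤ δ) (hc : 0 ≤ c)
    (E : ℕ → ℝ) (h0 : E 0 = 0)
    (hrec : ∀ i, E (i + 1) ≤ (1 - 1 / (2 * δ)) * E i + (2 * (δ ^ 2 - 1) / δ) * c) :
    ∀ i, E i ≤ 4 * δ ^ 2 * c := by
  have hδ0 : 0 < δ := by linarith
  refine forall_le_of_le_mul_add ?_ ?_ (by rw [h0]; positivity) hrec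
  · have : 1 / (2 * δ) ≤ 1 := by rw [div_le_one (by positivity)]; linarith
    linarith
  · -- one step of the recursion lowers the candidate bound 4δ²c by exactly 2c/δ
    have step : (1 - 1 / (2 * δ)) * (4 * δ ^ 2 * c) + (2 * (δ ^ 2 - 1) / δ) * c
        = 4 * δ ^ 2 * c - 2 * c / δ := by
      field_simp
      ring
    have : 0 ≤ 2 * c / δ := by positivity
    linarith

theorem bounded_memory_recursion (δ c : ℝ) (hδ : 1 ≤ δ) (hc : 0 ≤ c)
    (E : ℕ → ℝ) (hE : ∀ i, 0 ≤ E i) (h0 : E 0 = 0)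
    (hrec : ∀ i, E (i + 1) ≤ (1 - 1 / (2 * δ)) * E i + (2 * (δ ^ 2 - 1) / δ) * c) :
    ∀ i, E i ≤ 4 * δ ^ 2 * c :=
  bounded_memory_recursion_general δ c hδ hc E h0 hrec
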